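/- Let g ≥ 1, M := g(g+1)/2, and fix the pair-enumeration k ↦ (𝔣₁(k),𝔣₂(k)) of {1,…,M} onto {(i,j) : 1 ≤ i ≤ j ≤ g}. Then for every g×g complex matrix C and all vectors u, w ∈ ℂ^g: ( Σ_{i,j=1}^g u_i C_{ij} w_j )² = Σ_{k,l=1}^M (2 − δ_{𝔣₁(k)𝔣₂(k)}) · uu_k · (CC)_{kl} · ww_l. -/

import Mathlib

/-- The list of pairs `(i,j)`, `0 ≤ i ≤ j < g` (0-based), in the order
`(1,1),…,(g,g),(1,2),…,(1,g),(2,3),…,(2,g),…,(g-1,g)` of the paper. -/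
def pairList (g : ℕ) : List (ℕ × ℕ) :=
  ((List.range g).map fun i => (i, i)) ++
    (List.range g).flatMap fun i =>
      ((List.range g).filter fun j => i < j).map fun j => (i, j)

/-- The pair-enumeration `k ↦ (𝔣₁(k), 𝔣₂(k))` of `{0,…,M-1}`, `M = g(g+1)/2`,
onto the pairs `(i,j)` with `0 ≤ i ≤ j < g`, as a pair of elements of `Fin g`. -/
def pfin (g : ℕ) (hg : 0 < g) (k : ℕ) : Fin g × Fin g :=
  (⟨((pairList g).getD k (0, 0)).1 % g, Nat.mod_lt _ hg⟩,
   ⟨((pairList g).getD k (0, 0)).2 % g, Nat.mod_lt _ hg⟩)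

/-- The doubled-index construction
`(AA)_{kl} = (A_{𝔣₁(k)𝔣₁(l)} A_{𝔣₂(k)𝔣₂(l)} + A_{𝔣₁(k)𝔣₂(l)} A_{𝔣₂(k)𝔣₁(l)}) / (1 + δ_{𝔣₁(l)𝔣₂(l)})`. -/
noncomputable def ddMat {g : ℕ} (hg : 0 < g) (A : Matrix (Fin g) (Fin g) ℂ)
    (k l : ℕ) : ℂ :=
  (A (pfin g hg k).1 (pfin g hg l).1 * A (pfin g hg k).2 (pfin g hg l).2 +
      A (pfin g hg k).1 (pfin g hg l).2 * A (pfin g hg k).2 (pfin g hg l).1) /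
    (1 + if (pfin g hg l).1 = (pfin g hg l).2 then (1 : ℂ) else 0)

/-!
Expanding the square, `(u ⬝ᵥ C *ᵥ w)²` is a sum over ordered pairs `p = (a, b)` of
`u a * u b * (C *ᵥ w) a * (C *ᵥ w) b`, and `(C *ᵥ w) a * (C *ᵥ w) b` is again a sum over ordered
pairs `q` of `C a q.1 * C b q.2 * w q.1 * w q.2`. Both sums fold onto the pairs with `p.1 ≤ p.2`:
a summand `H` becomes `(H q + H q.swap) / (1 + δ)`, which produces `(CC)_{kl}`, and for the
swap-symmetric outer summand this is the weight `2 - δ`. The enumeration `pfin` is a bijection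
from `{0, …, M - 1}` onto those pairs, which turns the folded sums into the sums over `k` and `l`.
-/

open Finset Matrix

lemma mem_pairList {g : ℕ} {p : ℕ × ℕ} : p ∈ pairList g ↔ p.1 ≤ p.2 ∧ p.2 < g := by
  rcases p with ⟨a, b⟩
  simp only [pairList, List.mem_append, List.mem_map, List.mem_flatMap, List.mem_filter,
    List.mem_range, Prod.mk.injEq, decide_eq_true_eq]
  constructor
  · rintro (⟨i, hi, rfl, rfl⟩ | ⟨i, hi, j, ⟨hj, hij⟩, rfl, rfl⟩) <;> omega
  · rintro ⟨hab, hb⟩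
    rcases hab.eq_or_lt with rfl | hab
    · exact .inl ⟨a, hb, rfl, rfl⟩
    · exact .inr ⟨a, by omega, b, ⟨hb, hab⟩, rfl, rfl⟩

lemma nodup_pairList (g : ℕ) : (pairList g).Nodup := by
  refine List.Nodup.append (List.nodup_range.map fun a b h => congrArg Prod.fst h)
    (List.nodup_flatMap.2 ⟨fun i _ => (List.nodup_range.filter _).map
      fun a b h => congrArg Prod.snd h, List.pairwise_lt_range.imp fun hij => ?_⟩) ?_
  · simp only [Function.onFun, List.disjoint_left, List.mem_map]
    rintro _ ⟨j, _, rfl⟩ ⟨j', _, h⟩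
    exact hij.ne (congrArg Prod.fst h).symm
  · simp only [List.disjoint_left, List.mem_map, List.mem_flatMap, List.mem_filter,
      decide_eq_true_eq]
    rintro _ ⟨i, _, rfl⟩ ⟨i', _, j, ⟨_, hj⟩, h⟩
    simp only [Prod.mk.injEq] at h
    omega

lemma card_filter_fst_le_snd (n : ℕ) : #{p : Fin n × Fin n | p.1 ≤ p.2} = n * (n + 1) / 2 := by
  calc #{p : Fin n × Fin n | p.1 ≤ p.2}
      = ∑ i : Fin n, #(Ici i) := by
        simp only [card_filter, Fintype.sum_prod_type, ← filter_le_eq_Ici]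
    _ = ∑ i ∈ range (n + 1), (n - i) := by
        simp [Fin.card_Ici, Fin.sum_univ_eq_sum_range (fun i => n - i), sum_range_succ]
    _ = ∑ i ∈ range (n + 1), i := by
        rw [← sum_range_reflect]
        exact sum_congr rfl fun i hi => by have := mem_range.1 hi; omega
    _ = n * (n + 1) / 2 := by rw [sum_range_id, Nat.add_sub_cancel, mul_comm]

lemma sum_range_pfin {M : Type*} [AddCommMonoid M] {g : ℕ} (hg : 0 < g)
    (f : Fin g × Fin g → M) :
    ∑ k ∈ range (g * (g + 1) / 2), f (pfin g hg k) = ∑ p with p.1 ≤ p.2, f p := by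
  set e : ℕ × ℕ → Fin g × Fin g :=
    fun p => (⟨p.1 % g, Nat.mod_lt _ hg⟩, ⟨p.2 % g, Nat.mod_lt _ hg⟩)
  have he : Set.InjOn e {p | p.1 ≤ p.2 ∧ p.2 < g} := by
    rintro p ⟨hp, hpg⟩ q ⟨hq, hqg⟩ h
    simp only [e, Prod.mk.injEq, Fin.mk.injEq] at h
    rw [Nat.mod_eq_of_lt hpg, Nat.mod_eq_of_lt hqg, Nat.mod_eq_of_lt (hp.trans_lt hpg),
      Nat.mod_eq_of_lt (hq.trans_lt hqg)] at h
    exact Prod.ext h.1 h.2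
  have hnd := (nodup_pairList g).map_on fun p hp q hq => he (mem_pairList.1 hp) (mem_pairList.1 hq)
  have hset : ((pairList g).map e).toFinset = ({p | p.1 ≤ p.2} : Finset (Fin g × Fin g)) := by
    ext q
    simp only [List.mem_toFinset, List.mem_map, mem_filter_univ, mem_pairList]
    constructor
    · rintro ⟨p, ⟨hp, hpg⟩, rfl⟩
      simp only [e, Fin.mk_le_mk, Nat.mod_eq_of_lt hpg, Nat.mod_eq_of_lt (hp.trans_lt hpg)]
      exact hp
    · intro hq
      exact ⟨(q.1, q.2), ⟨hq, q.2.isLt⟩, by simp [e, Nat.mod_eq_of_lt]⟩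
  have hlen : (pairList g).length = g * (g + 1) / 2 := by
    rw [← card_filter_fst_le_snd, ← hset, List.toFinset_card_of_nodup hnd, List.length_map]
  rw [← hset, List.sum_toFinset _ hnd, ← hlen, sum_range, List.map_map,
    ← Fin.sum_univ_fun_getElem]
  simp [pfin, e]

section
variable {ι K : Type*} [Fintype ι] [LinearOrder ι] [Field K] [NeZero (2 : K)]

lemma sum_fst_le_snd_add_swap_div (H : ι × ι → K) :
    ∑ p : ι × ι with p.1 ≤ p.2, (H p + H p.swap) / (1 + if p.1 = p.2 then 1 else 0) =
      ∑ p, H p := by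
  set F : ι × ι → K := fun p => H p / (1 + if p.1 = p.2 then 1 else 0)
  have hswap : ∑ p : ι × ι with p.1 ≤ p.2, F p.swap = ∑ p : ι × ι with p.2 ≤ p.1, F p :=
    sum_equiv (Equiv.prodComm ι ι) (by simp) fun _ _ => rfl
  calc ∑ p : ι × ι with p.1 ≤ p.2, (H p + H p.swap) / (1 + if p.1 = p.2 then 1 else 0)
      = ∑ p : ι × ι with p.1 ≤ p.2, F p + ∑ p : ι × ι with p.1 ≤ p.2, F p.swap := by
        rw [← sum_add_distrib]
        refine sum_congr rfl fun p _ => ?_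
        simp only [F, add_div, Prod.fst_swap, Prod.snd_swap, eq_comm]
    _ = ∑ p, H p := by
        -- the two ranges cover the diagonal twice, which the weight `1 + δ` compensates
        rw [hswap, sum_filter, sum_filter, ← sum_add_distrib]
        refine sum_congr rfl fun p _ => ?_
        rcases lt_trichotomy p.1 p.2 with h | h | h
        · simp [F, h.le, h.ne, h.not_ge]
        · simp only [F, h, le_refl, if_true, one_add_one_eq_two]
          exact add_halves (H p)
        · simp [F, h.le, h.ne', h.not_ge]

lemma sum_fst_le_snd_two_sub_mul {X : ι × ι → K} (hX : ∀ p, X p.swap = X p) :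
    ∑ p : ι × ι with p.1 ≤ p.2, (2 - if p.1 = p.2 then 1 else 0) * X p = ∑ p, X p := by
  rw [← sum_fst_le_snd_add_swap_div]
  refine sum_congr rfl fun p _ => ?_
  rw [hX, ← two_mul]
  split_ifs
  · rw [one_add_one_eq_two, mul_div_cancel_left₀ _ two_ne_zero]; ring
  · simp

lemma mulVec_mul_mulVec_eq_sum_fst_le_snd (C : Matrix ι ι K) (w : ι → K) (a b : ι) :
    (C *ᵥ w) a * (C *ᵥ w) b = ∑ q : ι × ι with q.1 ≤ q.2,
      (C a q.1 * C b q.2 + C a q.2 * C b q.1) / (1 + if q.1 = q.2 then 1 else 0) *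
        (w q.1 * w q.2) := by
  calc (C *ᵥ w) a * (C *ᵥ w) b = ∑ q : ι × ι, C a q.1 * w q.1 * (C b q.2 * w q.2) := by
        simp only [Fintype.sum_prod_type, mulVec, dotProduct, sum_mul_sum]
    _ = _ := by
        rw [← sum_fst_le_snd_add_swap_div]
        exact sum_congr rfl fun q _ => by simp only [Prod.fst_swap, Prod.snd_swap]; ring

lemma sq_dotProduct_mulVec_eq_sum_fst_le_snd (C : Matrix ι ι K) (u w : ι → K) :
    (u ⬝ᵥ C *ᵥ w) ^ 2 = ∑ p : ι × ι with p.1 ≤ p.2, ∑ q : ι × ι with q.1 ≤ q.2,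
      (2 - if p.1 = p.2 then 1 else 0) * (u p.1 * u p.2) *
        ((C p.1 q.1 * C p.2 q.2 + C p.1 q.2 * C p.2 q.1) / (1 + if q.1 = q.2 then 1 else 0)) *
          (w q.1 * w q.2) := by
  set v := C *ᵥ w
  calc (u ⬝ᵥ v) ^ 2 = ∑ p : ι × ι, u p.1 * v p.1 * (u p.2 * v p.2) := by
        rw [sq, dotProduct, sum_mul_sum, Fintype.sum_prod_type]
    _ = ∑ p : ι × ι with p.1 ≤ p.2,
          (2 - if p.1 = p.2 then 1 else 0) * (u p.1 * u p.2) * (v p.1 * v p.2) := by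
        rw [← sum_fst_le_snd_two_sub_mul fun _ => mul_comm _ _]
        exact sum_congr rfl fun p _ => by ring
    _ = _ := by
        refine sum_congr rfl fun p _ => ?_
        rw [mulVec_mul_mulVec_eq_sum_fst_le_snd, mul_sum]
        exact sum_congr rfl fun q _ => by ring

end

/-- The key identity of **Theorem 5.4** (square of the Bergman kernel):
`(∑_{i,j} u_i C_{ij} w_j)² = ∑_{k,l} (2 - δ_{𝔣₁(k)𝔣₂(k)}) uu_k (CC)_{kl} ww_l`. -/
theorem bilinear_square_pair_indices (g : ℕ) (hg : 0 < g)
    (C : Matrix (Fin g) (Fin g) ℂ) (u w : Fin g → ℂ) :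
    (∑ i, ∑ j, u i * C i j * w j) ^ 2 =
      ∑ k ∈ Finset.range (g * (g + 1) / 2), ∑ l ∈ Finset.range (g * (g + 1) / 2),
        (2 - if (pfin g hg k).1 = (pfin g hg k).2 then (1 : ℂ) else 0) *
          (u (pfin g hg k).1 * u (pfin g hg k).2) * ddMat hg C k l *
          (w (pfin g hg l).1 * w (pfin g hg l).2) := by
  calc (∑ i, ∑ j, u i * C i j * w j) ^ 2 = (u ⬝ᵥ C *ᵥ w) ^ 2 := by
        simp only [dotProduct, mulVec, mul_sum, mul_assoc]
    _ = _ := by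
        rw [sq_dotProduct_mulVec_eq_sum_fst_le_snd, ← sum_range_pfin hg]
        refine sum_congr rfl fun k _ => ?_
        rw [← sum_range_pfin hg]
        rfl
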